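/- Let 0 < δ < q < 1 and define P(k) as in the inter-attempt-time pmf: P(k) = (q-δ)·(1-q)^(k-2)·δ·∑_{l=1}^{k-1}((1-δ)/(1-q))^(l-1) + δ·(1-q)^(k-1) for k ≥ 1. Then ∑_{k=1}^∞ k^2·P(k) = (2-δ)/δ^2. -/

import Mathlib

/-!
Telescoping the geometric sum in `P` collapses the pmf to the geometric law
`P(k + 1) = δ (1 - δ) ^ k`, independently of `q`. Writing `(n + 1) ^ 2 = 2 * C(n + 2, 2) - C(n + 1, 1)`
reduces its second moment to the negative-binomial series `∑ C(n + j, j) r ^ n = (1 - r)⁻¹ ^ (j + 1)`.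
-/

open Finset

lemma sub_mul_pow_pred_mul_geom_sum_div {K : Type*} [Field K] (x : K) {y : K} (hy : y ≠ 0)
    (n : ℕ) : (x - y) * y ^ (n - 1) * ∑ i ∈ range n, (x / y) ^ i = x ^ n - y ^ n := by
  cases n with
  | zero => simp
  | succ m =>
    calc (x - y) * y ^ m * ∑ i ∈ range (m + 1), (x / y) ^ i
        = y ^ (m + 1) * ((x / y - 1) * ∑ i ∈ range (m + 1), (x / y) ^ i) := by
          field_simp
          ring
      _ = x ^ (m + 1) - y ^ (m + 1) := by
          rw [mul_geom_sum, div_pow]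
          field_simp

lemma interattempt_pmf_eq_geometric {K : Type*} [Field K] {δ q : K} (hq : q ≠ 1) (k : ℕ) :
    (q - δ) * (1 - q) ^ (k - 1) * δ * (∑ l ∈ range k, ((1 - δ) / (1 - q)) ^ l) +
      δ * (1 - q) ^ k = δ * (1 - δ) ^ k := by
  have h := sub_mul_pow_pred_mul_geom_sum_div (1 - δ) (sub_ne_zero.2 hq.symm) k
  linear_combination δ * h

lemma hasSum_succ_sq_mul_geometric {𝕜 : Type*} [NormedField 𝕜] [CompleteSpace 𝕜] {r : 𝕜}
    (hr : ‖r‖ < 1) :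
    HasSum (fun n : ℕ ↦ ((n : 𝕜) + 1) ^ 2 * r ^ n) ((1 + r) / (1 - r) ^ 3) := by
  have hr1 : 1 - r ≠ 0 := sub_ne_zero.2 fun h ↦ by simp [← h] at hr
  have hterm (n : ℕ) : ((n : 𝕜) + 1) ^ 2 * r ^ n =
      2 * ((n + 2).choose 2 * r ^ n) - (n + 1).choose 1 * r ^ n := by
    have hchoose : ((n + 2).choose 2 * 2 : 𝕜) = (n + 2) * (n + 1) := by
      have h : (n + 2) * (n + 1) = (n + 2).choose 2 * 2 := by
        simpa only [Nat.choose_one_right] using Nat.add_one_mul_choose_eq (n + 1) 1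
      simpa using congrArg (Nat.cast : ℕ → 𝕜) h.symm
    rw [Nat.choose_one_right]
    push_cast
    linear_combination (-(r ^ n)) * hchoose
  have hvalue : (1 + r) / (1 - r) ^ 3 = 2 * (1 / (1 - r) ^ (2 + 1)) - 1 / (1 - r) ^ (1 + 1) := by
    field_simp
    ring
  simp_rw [hterm, hvalue]
  exact ((hasSum_choose_mul_geometric_of_norm_lt_one 2 hr).mul_left 2).sub
    (hasSum_choose_mul_geometric_of_norm_lt_one 1 hr)

/-- pmf of the inter-attempt time of the EH node in the regime `δ < q`:
`P(k) = (q-δ)(1-q)^(k-2) δ ∑_{l=1}^{k-1} ((1-δ)/(1-q))^(l-1) + δ (1-q)^(k-1)`.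
It sums to `1` and has mean `1/δ`. -/
theorem eh_interattempt_second_moment (δ q : ℝ) (hδ : 0 < δ) (hδq : δ < q) (hq : q < 1)
    (P : ℕ → ℝ)
    (hP : ∀ k : ℕ, P (k + 1) =
      (q - δ) * (1 - q) ^ (k - 1) * δ *
          (∑ l ∈ Finset.range k, ((1 - δ) / (1 - q)) ^ l) +
        δ * (1 - q) ^ k) :
    (∑' k : ℕ, (((k + 1 : ℕ) : ℝ)) ^ 2 * P (k + 1)) = (2 - δ) / δ ^ 2 := by
  have hgeom (k : ℕ) : P (k + 1) = δ * (1 - δ) ^ k :=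
    (hP k).trans (interattempt_pmf_eq_geometric hq.ne k)
  have hr : ‖1 - δ‖ < 1 := by
    rw [Real.norm_eq_abs, abs_lt]
    constructor <;> linarith
  calc ∑' k : ℕ, (((k + 1 : ℕ) : ℝ)) ^ 2 * P (k + 1)
      = ∑' k : ℕ, δ * (((k : ℝ) + 1) ^ 2 * (1 - δ) ^ k) :=
        tsum_congr fun k ↦ by rw [hgeom]; push_cast; ring
    _ = δ * ((1 + (1 - δ)) / (1 - (1 - δ)) ^ 3) :=
        ((hasSum_succ_sq_mul_geometric hr).mul_left δ).tsum_eq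
    _ = (2 - δ) / δ ^ 2 := by
        rw [sub_sub_cancel]
        field_simp
        ring
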